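/- Let H = (V,H) be a simple boolean representable simplicial complex of dimension ≥ 2 (P₂(V) ⊆ H and some face has 3 elements). Then the number of connected components of the graph of flats Γ Fl(H) equals the number of connected components of the Hasse-diagram graph of the proper part of the lattice of flats, Δ(Fl(H))*. -/

import Mathlib

open scoped Classical

variable {V : Type}

def IsSC (faces : Set (Finset V)) : Prop :=
  (∀ v : V, ({v} : Finset V) ∈ faces) ∧
    ∀ ⦃X Y : Finset V⦄, X ∈ faces → Y ⊆ X → Y ∈ faces

def IsFlat (faces : Set (Finset V)) (F : Set V) : Prop :=
  ∀ I ∈ faces, (I : Set V) ⊆ F → ∀ p ∉ F, insert p I ∈ faces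

def cl (faces : Set (Finset V)) (X : Set V) : Set V :=
  ⋂₀ {F : Set V | IsFlat faces F ∧ X ⊆ F}

def BRep (faces : Set (Finset V)) : Prop :=
  ∀ X ∈ faces, ∃ (k : ℕ) (F : Fin (k + 1) → Set V) (x : Fin k → V),
    (∀ i, IsFlat faces (F i)) ∧ StrictMono F ∧ Function.Injective x ∧
    (∀ i : Fin k, x i ∈ F i.succ \ F i.castSucc) ∧
    X = Finset.image x Finset.univ

def skel (faces : Set (Finset V)) : SimpleGraph V where
  Adj p q := p ≠ q ∧ ({p, q} : Finset V) ∈ faces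
  symm := by
    constructor
    rintro p q ⟨h1, h2⟩
    exact ⟨h1.symm, by rwa [Finset.pair_comm]⟩
  loopless := by constructor; rintro p ⟨h, _⟩; exact h rfl

def flatGraph (faces : Set (Finset V)) : SimpleGraph V where
  Adj p q := p ≠ q ∧ cl faces {p, q} ≠ Set.univ
  symm := by
    constructor
    rintro p q ⟨h1, h2⟩
    exact ⟨h1.symm, by rwa [Set.pair_comm]⟩
  loopless := by constructor; rintro p ⟨h, _⟩; exact h rfl
def hasseGraph (faces : Set (Finset V)) :
    SimpleGraph {F : Set V // IsFlat faces F ∧ F ≠ ∅ ∧ F ≠ Set.univ} where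
  Adj a b :=
    (a.1 ⊂ b.1 ∧ ∀ c : Set V, IsFlat faces c → ¬(a.1 ⊂ c ∧ c ⊂ b.1)) ∨
    (b.1 ⊂ a.1 ∧ ∀ c : Set V, IsFlat faces c → ¬(b.1 ⊂ c ∧ c ⊂ a.1))
  symm := by constructor; rintro a b (h | h) <;> [exact Or.inr h; exact Or.inl h]
  loopless := by constructor; rintro a (⟨h, _⟩ | ⟨h, _⟩) <;> exact h.ne rfl

/-!
Send a point `p` to the atom `{p}` and a proper flat to any of its points. An edge `p — q` of
the graph of flats yields the proper flat `cl {p, q}` above both atoms, and in a finite poset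
comparable elements are joined by a chain of covers, so the two atoms are connected in the Hasse
diagram. Conversely, two comparable proper flats lie in a common proper flat, and any two points
of a proper flat are adjacent in the graph of flats. So both maps respect connectivity, and they
are mutually inverse up to connectivity.
-/

namespace SimpleGraph

variable {α β : Type*} {G : SimpleGraph α} {H : SimpleGraph β}

theorem Reachable.map_of_adj_reachable {f : α → β}
    (hf : ∀ a a', G.Adj a a' → H.Reachable (f a) (f a')) {a a' : α} (h : G.Reachable a a') :
    H.Reachable (f a) (f a') := by
  rw [reachable_iff_reflTransGen] at h
  induction h with
  | refl => rfl
  | tail _ hadj ih => exact ih.trans (hf _ _ hadj)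

noncomputable def connectedComponentEquivOfReachable (f : α → β) (g : β → α)
    (hf : ∀ a a', G.Adj a a' → H.Reachable (f a) (f a'))
    (hg : ∀ b b', H.Adj b b' → G.Reachable (g b) (g b'))
    (hgf : ∀ a, G.Reachable (g (f a)) a) (hfg : ∀ b, H.Reachable (f (g b)) b) :
    G.ConnectedComponent ≃ H.ConnectedComponent where
  toFun := Quot.map f fun _ _ => Reachable.map_of_adj_reachable hf
  invFun := Quot.map g fun _ _ => Reachable.map_of_adj_reachable hg
  left_inv := ConnectedComponent.ind fun a => ConnectedComponent.sound (hgf a)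
  right_inv := ConnectedComponent.ind fun b => ConnectedComponent.sound (hfg b)

end SimpleGraph

section Flats

variable {faces : Set (Finset V)}

theorem isFlat_cl (X : Set V) : IsFlat faces (cl faces X) := by
  intro I hI hIcl p hp
  obtain ⟨F, ⟨hF, hXF⟩, hpF⟩ : ∃ F ∈ {F | IsFlat faces F ∧ X ⊆ F}, p ∉ F := by
    simpa [cl, and_assoc] using hp
  exact hF I hI (hIcl.trans (Set.sInter_subset_of_mem ⟨hF, hXF⟩)) p hpF

theorem subset_cl (X : Set V) : X ⊆ cl faces X :=
  Set.subset_sInter fun _ hF => hF.2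

theorem cl_subset_of_isFlat {X F : Set V} (hF : IsFlat faces F) (hXF : X ⊆ F) :
    cl faces X ⊆ F :=
  Set.sInter_subset_of_mem ⟨hF, hXF⟩

theorem isFlat_singleton (hsc : IsSC faces)
    (hsimple : ∀ p q : V, p ≠ q → ({p, q} : Finset V) ∈ faces) (p : V) :
    IsFlat faces ({p} : Set V) := by
  intro I _ hI q hq
  rcases Finset.subset_singleton_iff.1 (fun x hx => by simpa using hI hx) with rfl | rfl
  · simpa using hsc.1 q
  · exact hsimple q p hq

theorem flatGraph_reachable_of_mem {F : Set V} (hF : IsFlat faces F) (hFV : F ≠ Set.univ)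
    {p q : V} (hp : p ∈ F) (hq : q ∈ F) : (flatGraph faces).Reachable p q := by
  by_cases hpq : p = q
  · exact hpq ▸ SimpleGraph.Reachable.rfl
  refine SimpleGraph.Adj.reachable ⟨hpq, fun hcl => hFV ?_⟩
  rw [← Set.univ_subset_iff, ← hcl]
  exact cl_subset_of_isFlat hF (Set.insert_subset hp (Set.singleton_subset_iff.2 hq))

/-- The proper part `(Fl H)*`, ordered by inclusion: the vertex type of `hasseGraph`. -/
abbrev ProperFlat (faces : Set (Finset V)) :=
  {F : Set V // IsFlat faces F ∧ F ≠ ∅ ∧ F ≠ Set.univ}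

theorem hasseGraph_adj_of_covBy {F G : ProperFlat faces} (h : F ⋖ G) :
    (hasseGraph faces).Adj F G := by
  refine Or.inl ⟨h.lt, fun C hC ⟨hFC, hCG⟩ => h.2 (c := ⟨C, hC, ?_, ?_⟩) hFC hCG⟩
  · exact Set.nonempty_iff_ne_empty.1 ((Set.nonempty_iff_ne_empty.2 F.2.2.1).mono hFC.subset)
  · exact fun hCV => G.2.2.2 (Set.univ_subset_iff.1 (hCV ▸ hCG.subset))

theorem hasseGraph_reachable_of_subset [Finite V] {F G : ProperFlat faces} (h : F.1 ⊆ G.1) :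
    (hasseGraph faces).Reachable F G := by
  let _ : LocallyFiniteOrder (ProperFlat faces) :=
    LocallyFiniteOrder.ofFiniteIcc fun _ _ => Set.toFinite _
  rw [SimpleGraph.reachable_iff_reflTransGen]
  exact Relation.ReflTransGen.mono (fun _ _ => hasseGraph_adj_of_covBy) _ _
    ((le_iff_reflTransGen_covBy (x := F) (y := G)).1 h)

end Flats

theorem flatGraph_components_eq_hasse_components_general [Fintype V]
    {faces : Set (Finset V)} (hsc : IsSC faces)
    (hsimple : ∀ p q : V, p ≠ q → ({p, q} : Finset V) ∈ faces)
    (hdim : ∃ X ∈ faces, X.card = 3) :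
    Nat.card (flatGraph faces).ConnectedComponent =
      Nat.card (hasseGraph faces).ConnectedComponent := by
  obtain ⟨X, -, hX⟩ := hdim
  have : Nontrivial V := by
    obtain ⟨x, -, y, -, hxy⟩ := Finset.one_lt_card.1 (by omega : 1 < X.card)
    exact ⟨x, y, hxy⟩
  let atom (p : V) : ProperFlat faces :=
    ⟨{p}, isFlat_singleton hsc hsimple p, Set.singleton_ne_empty p, Set.singleton_ne_univ p⟩
  have hpoint (F : ProperFlat faces) : ∃ p, p ∈ F.1 :=
    Set.nonempty_iff_ne_empty.2 F.2.2.1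
  choose point hpoint using hpoint
  refine Nat.card_congr (SimpleGraph.connectedComponentEquivOfReachable atom point ?_ ?_ ?_ ?_)
  · rintro p q ⟨-, hpq⟩
    let L : ProperFlat faces :=
      ⟨cl faces {p, q}, isFlat_cl _, Set.nonempty_iff_ne_empty.1 ⟨p, subset_cl _ (by simp)⟩, hpq⟩
    have hsub (r : V) (hr : r ∈ ({p, q} : Set V)) : (atom r).1 ⊆ L.1 :=
      Set.singleton_subset_iff.2 (subset_cl _ hr)
    exact (hasseGraph_reachable_of_subset (hsub p (by simp))).trans
      (hasseGraph_reachable_of_subset (hsub q (by simp))).symm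
  · rintro F G (⟨hFG, -⟩ | ⟨hGF, -⟩)
    · exact flatGraph_reachable_of_mem G.2.1 G.2.2.2 (hFG.subset (hpoint F)) (hpoint G)
    · exact flatGraph_reachable_of_mem F.2.1 F.2.2.2 (hpoint F) (hGF.subset (hpoint G))
  · intro p
    rw [show point (atom p) = p from hpoint (atom p)]
  · exact fun F => hasseGraph_reachable_of_subset (Set.singleton_subset_iff.2 (hpoint F))

theorem flatGraph_components_eq_hasse_components [Fintype V] [Nonempty V]
    {faces : Set (Finset V)} (hsc : IsSC faces) (hbr : BRep faces)
    (hsimple : ∀ p q : V, p ≠ q → ({p, q} : Finset V) ∈ faces)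
    (hdim : ∃ X ∈ faces, X.card = 3) :
    Nat.card (flatGraph faces).ConnectedComponent =
      Nat.card (hasseGraph faces).ConnectedComponent :=
  flatGraph_components_eq_hasse_components_general hsc hsimple hdim
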